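/- arXiv:1910.05871 — 7 statements merged into one kernel-verified Lean document; each statement's English description precedes it below -/
import Mathlib

section
/- For a collision-free solution of the n-body problem with energy h > 0 defined on [0,∞) along which U(q(t)) ≤ K is bounded, there are constants C > 0, t₀ > 0 with r(t) ≤ C t for t ≥ t₀, and hence the rescaled time τ(t) = ∫_0^t ds/r(s) tends to +∞ as t → +∞. -/
/-
With `I = r² = Σ mᵢ|qᵢ|²` one has `I' = 2 Σ mᵢ⟪qᵢ, ξᵢ⟫` and, since `U` is homogeneous of degree
`-1` (Euler: `Σ ⟪qᵢ, Fᵢ⟫ = -U`), the Lagrange–Jacobi identity `I'' = 2(Σ mᵢ|ξᵢ|² - U) = 4h + 2U`.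
So `I'' ≤ 4h + 2K`, and integrating twice bounds `I` by a quadratic in `t`, i.e. `r ≤ C t` for
`t ≥ 1`. Then `τ(t) ≥ τ(1) + C⁻¹ log t → ∞`. The integrand `1/r` is continuous because `r > 0`:
a zero of `r` would, by collision-freeness, leave at most one body, pinned at the origin by the
centre of mass, hence with zero energy.
-/

open Finset Filter

noncomputable def pot {d n : ℕ} (m : Fin n → ℝ) (x : Fin n → EuclideanSpace ℝ (Fin d)) : ℝ :=
  ∑ p ∈ Finset.univ.filter (fun p : Fin n × Fin n => p.1 < p.2),
    m p.1 * m p.2 / ‖x p.1 - x p.2‖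

open scoped RealInnerProductSpace

theorem pot_nonneg {d n : ℕ} {m : Fin n → ℝ} (hm : ∀ i, 0 ≤ m i)
    (x : Fin n → EuclideanSpace ℝ (Fin d)) : 0 ≤ pot m x :=
  sum_nonneg fun p _ => div_nonneg (mul_nonneg (hm p.1) (hm p.2)) (norm_nonneg _)

theorem sum_sum_eq_two_nsmul_sum_filter_lt {ι M : Type*} [Fintype ι] [LinearOrder ι]
    [AddCommMonoid M] (f : ι → ι → M) (hsymm : ∀ i j, f i j = f j i) (hdiag : ∀ i, f i i = 0) :
    ∑ i, ∑ j, f i j = 2 • ∑ p ∈ univ.filter (fun p : ι × ι => p.1 < p.2), f p.1 p.2 := by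
  have hsplit : ∀ p : ι × ι, f p.1 p.2 =
      (if p.1 < p.2 then f p.1 p.2 else 0) + (if p.2 < p.1 then f p.2 p.1 else 0) := by
    rintro ⟨i, j⟩
    rcases lt_trichotomy i j with hij | rfl | hij
    · simp [hij, hij.not_gt]
    · simp [hdiag]
    · simp [hij, hij.not_gt, hsymm i j]
  have hswap : ∑ p : ι × ι, (if p.2 < p.1 then f p.2 p.1 else 0)
      = ∑ p : ι × ι, (if p.1 < p.2 then f p.1 p.2 else 0) :=
    Fintype.sum_equiv (Equiv.prodComm ι ι) _ _ fun _ => rfl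
  rw [← Fintype.sum_prod_type', Fintype.sum_congr _ _ hsplit, sum_add_distrib, hswap,
    ← two_nsmul, sum_filter]

noncomputable def force {d n : ℕ} (m : Fin n → ℝ) (x : Fin n → EuclideanSpace ℝ (Fin d))
    (i : Fin n) : EuclideanSpace ℝ (Fin d) :=
  ∑ j ∈ univ.filter (fun j => j ≠ i), (m i * m j / ‖x i - x j‖ ^ 3) • (x j - x i)

theorem div_pow_three_mul_sq (a b : ℝ) : a / b ^ 3 * b ^ 2 = a / b := by
  rcases eq_or_ne b 0 with rfl | hb
  · simp
  · field_simp

theorem sum_inner_force_eq_neg_pot {d n : ℕ} (m : Fin n → ℝ)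
    (x : Fin n → EuclideanSpace ℝ (Fin d)) : ∑ i, ⟪x i, force m x i⟫ = -pot m x := by
  set g : Fin n → Fin n → ℝ := fun i j => m i * m j / ‖x i - x j‖ ^ 3 * ⟪x i, x j - x i⟫
  have hforce : ∑ i, ⟪x i, force m x i⟫ = ∑ i, ∑ j, g i j := by
    refine Fintype.sum_congr _ _ fun i => ?_
    rw [force, inner_sum, sum_filter_of_ne]
    · simp only [g, real_inner_smul_right]
    · intro j _ hj hji
      simp [hji] at hj
  have hpair : ∀ i j, g i j + g j i = -(m i * m j / ‖x i - x j‖) := by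
    intro i j
    have hinner : ⟪x i, x j - x i⟫ + ⟪x j, x i - x j⟫ = -‖x i - x j‖ ^ 2 := by
      rw [← real_inner_self_eq_norm_sq]
      simp only [inner_sub_left, inner_sub_right, real_inner_comm]
      ring
    simp only [g, norm_sub_rev (x j) (x i), mul_comm (m j) (m i), ← mul_add, hinner]
    rw [mul_neg, div_pow_three_mul_sq]
  have hpot := sum_sum_eq_two_nsmul_sum_filter_lt (fun i j => m i * m j / ‖x i - x j‖)
    (fun i j => by rw [mul_comm, norm_sub_rev]) (fun i => by simp)
  rw [← pot, two_nsmul] at hpot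
  have hsym : ∑ i, ∑ j, g i j = ∑ i, ∑ j, g j i := sum_comm
  have hdouble : ∑ i, ∑ j, g i j + ∑ i, ∑ j, g i j = -∑ i, ∑ j, m i * m j / ‖x i - x j‖ := by
    nth_rewrite 2 [hsym]
    simp only [← sum_add_distrib, hpair, sum_neg_distrib]
  linarith

noncomputable def inertia {ι E : Type*} [Fintype ι] [NormedAddCommGroup E] (m : ι → ℝ)
    (x : ι → E) : ℝ :=
  ∑ i, m i * ‖x i‖ ^ 2

theorem inertia_nonneg {ι E : Type*} [Fintype ι] [NormedAddCommGroup E] {m : ι → ℝ}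
    (hm : ∀ i, 0 ≤ m i) (x : ι → E) : 0 ≤ inertia m x :=
  sum_nonneg fun i _ => mul_nonneg (hm i) (sq_nonneg _)

theorem inertia_eq_zero_iff {ι E : Type*} [Fintype ι] [NormedAddCommGroup E] {m : ι → ℝ}
    (hm : ∀ i, 0 < m i) {x : ι → E} : inertia m x = 0 ↔ x = 0 := by
  rw [inertia, sum_eq_zero_iff_of_nonneg fun i _ => mul_nonneg (hm i).le (sq_nonneg _)]
  simp [funext_iff, (hm _).ne']

theorem hasDerivWithinAt_inertia {ι E : Type*} [Fintype ι] [NormedAddCommGroup E]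
    [InnerProductSpace ℝ E] (m : ι → ℝ) {x : ℝ → ι → E} {v : ι → E} {s : Set ℝ} {t : ℝ}
    (hx : ∀ i, HasDerivWithinAt (fun u => x u i) (v i) s t) :
    HasDerivWithinAt (fun u => inertia m (x u)) (2 * ∑ i, m i * ⟪x t i, v i⟫) s t := by
  have := HasDerivWithinAt.fun_sum fun i (_ : i ∈ univ) => ((hx i).norm_sq).const_mul (m i)
  refine this.congr_deriv ?_
  rw [mul_sum]
  exact sum_congr rfl fun i _ => by ring

theorem hasDerivWithinAt_lagrange_jacobi {d n : ℕ} {m : Fin n → ℝ} (hm : ∀ i, m i ≠ 0)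
    {q ξ : ℝ → Fin n → EuclideanSpace ℝ (Fin d)} {s : Set ℝ} {t : ℝ}
    (hq : ∀ i, HasDerivWithinAt (fun u => q u i) (ξ t i) s t)
    (hξ : ∀ i, HasDerivWithinAt (fun u => ξ u i) ((m i)⁻¹ • force m (q t) i) s t) :
    HasDerivWithinAt (fun u => 2 * ∑ i, m i * ⟪q u i, ξ u i⟫)
      (2 * (inertia m (ξ t) - pot m (q t))) s t := by
  have := (HasDerivWithinAt.fun_sum fun i (_ : i ∈ univ) =>
    ((hq i).inner ℝ (hξ i)).const_mul (m i)).const_mul 2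
  refine this.congr_deriv ?_
  have hterm : ∀ i, m i * (⟪q t i, (m i)⁻¹ • force m (q t) i⟫ + ⟪ξ t i, ξ t i⟫)
      = ⟪q t i, force m (q t) i⟫ + m i * ‖ξ t i‖ ^ 2 := fun i => by
    rw [real_inner_smul_right, real_inner_self_eq_norm_sq, mul_add, ← mul_assoc,
      mul_inv_cancel₀ (hm i), one_mul]
  rw [sum_congr rfl fun i _ => hterm i, sum_add_distrib, sum_inner_force_eq_neg_pot, inertia]
  ring

theorem le_of_hasDerivWithinAt_le_Ici {f g f' g' : ℝ → ℝ} {a : ℝ}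
    (hf : ∀ t ∈ Set.Ici a, HasDerivWithinAt f (f' t) (Set.Ici a) t)
    (hg : ∀ t ∈ Set.Ici a, HasDerivWithinAt g (g' t) (Set.Ici a) t)
    (ha : f a ≤ g a) (hle : ∀ t ∈ Set.Ici a, f' t ≤ g' t) :
    ∀ t ∈ Set.Ici a, f t ≤ g t := by
  have hmono : MonotoneOn (fun t => g t - f t) (Set.Ici a) := by
    refine monotoneOn_of_hasDerivWithinAt_nonneg (f' := fun t => g' t - f' t) (convex_Ici a)
      (fun t ht => ((hg t ht).sub (hf t ht)).continuousWithinAt) (fun t ht => ?_)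
      (fun t ht => sub_nonneg.2 (hle t (interior_subset ht)))
    rw [interior_Ici] at ht ⊢
    have ht' : t ∈ Set.Ici a := Set.Ioi_subset_Ici_self ht
    exact ((hg t ht').sub (hf t ht')).mono Set.Ioi_subset_Ici_self
  intro t ht
  have := hmono Set.self_mem_Ici ht ht
  dsimp only at this
  linarith

theorem le_quadratic_of_hasDerivWithinAt_of_deriv_le {f f' f'' : ℝ → ℝ} {A : ℝ}
    (hf : ∀ t ∈ Set.Ici 0, HasDerivWithinAt f (f' t) (Set.Ici 0) t)
    (hf' : ∀ t ∈ Set.Ici 0, HasDerivWithinAt f' (f'' t) (Set.Ici 0) t)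
    (hA : ∀ t ∈ Set.Ici 0, f'' t ≤ A) :
    ∀ t ∈ Set.Ici 0, f t ≤ f 0 + f' 0 * t + A / 2 * t ^ 2 := by
  have hlin : ∀ t : ℝ, HasDerivAt (fun u => f' 0 + A * u) A t := fun t => by
    simpa using ((hasDerivAt_id t).const_mul A).const_add (f' 0)
  have hquad : ∀ t : ℝ, HasDerivAt (fun u => f 0 + f' 0 * u + A / 2 * u ^ 2) (f' 0 + A * t) t :=
    fun t => by
      have := (((hasDerivAt_id t).const_mul (f' 0)).const_add (f 0)).add
        ((hasDerivAt_pow 2 t).const_mul (A / 2))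
      exact this.congr_deriv (by simp; ring)
  have hf'_le := le_of_hasDerivWithinAt_le_Ici hf' (fun t _ => (hlin t).hasDerivWithinAt)
    (by simp) hA
  exact le_of_hasDerivWithinAt_le_Ici hf (fun t _ => (hquad t).hasDerivWithinAt) (by simp) hf'_le

theorem sqrt_le_mul_of_le_quadratic {x a b c t : ℝ} (ha : 0 ≤ a) (hc : 0 ≤ c) (ht : 1 ≤ t)
    (hx : x ≤ a + b * t + c * t ^ 2) : √x ≤ √(a + |b| + c) * t := by
  have ht0 : 0 ≤ t := zero_le_one.trans ht
  have hbound : x ≤ (a + |b| + c) * t ^ 2 := by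
    have h1 : a ≤ a * t ^ 2 := le_mul_of_one_le_right ha (one_le_pow₀ ht)
    have h2 : b * t ≤ |b| * t ^ 2 := by
      calc b * t ≤ |b| * t := mul_le_mul_of_nonneg_right (le_abs_self b) ht0
        _ ≤ |b| * t ^ 2 := mul_le_mul_of_nonneg_left (by nlinarith) (abs_nonneg b)
    linarith
  calc √x ≤ √((a + |b| + c) * t ^ 2) := Real.sqrt_le_sqrt hbound
    _ = √(a + |b| + c) * t := by
      rw [Real.sqrt_mul (by positivity), Real.sqrt_sq ht0]

theorem tendsto_integral_inv_atTop_of_le_mul {r : ℝ → ℝ} {C t₀ : ℝ}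
    (hr : ContinuousOn r (Set.Ici 0)) (hpos : ∀ s ∈ Set.Ici 0, 0 < r s) (hC : 0 < C)
    (ht₀ : 0 < t₀) (hle : ∀ s ≥ t₀, r s ≤ C * s) :
    Tendsto (fun t => ∫ s in (0:ℝ)..t, (r s)⁻¹) atTop atTop := by
  have hint : ∀ a ∈ Set.Ici (0:ℝ), ∀ b ∈ Set.Ici (0:ℝ),
      IntervalIntegrable (fun s => (r s)⁻¹) MeasureTheory.volume a b := fun a ha b hb =>
    ((hr.inv₀ fun s hs => (hpos s hs).ne').mono
      (Set.ordConnected_Ici.uIcc_subset ha hb)).intervalIntegrable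
  have hlower : ∀ t ≥ t₀, (∫ s in (0:ℝ)..t₀, (r s)⁻¹) + C⁻¹ * Real.log (t / t₀)
      ≤ ∫ s in (0:ℝ)..t, (r s)⁻¹ := by
    intro t ht
    have h0 : (0:ℝ) ∉ Set.uIcc t₀ t := by
      rw [Set.uIcc_of_le ht]
      exact fun h => ht₀.not_ge h.1
    have hcmp : ∫ s in t₀..t, C⁻¹ * s⁻¹ ≤ ∫ s in t₀..t, (r s)⁻¹ := by
      refine intervalIntegral.integral_mono_on ht
        ((intervalIntegral.intervalIntegrable_inv (fun s hs hs0 => h0 (hs0 ▸ hs))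
          continuousOn_id).const_mul _)
        (hint _ (Set.mem_Ici.2 ht₀.le) _ (Set.mem_Ici.2 (ht₀.le.trans ht))) fun s hs => ?_
      have hs₀ : 0 < s := ht₀.trans_le hs.1
      rw [← mul_inv]
      exact inv_anti₀ (hpos s hs₀.le) (hle s hs.1)
    rw [intervalIntegral.integral_const_mul, integral_inv h0] at hcmp
    rw [← intervalIntegral.integral_add_adjacent_intervals
      (hint _ Set.self_mem_Ici _ (Set.mem_Ici.2 ht₀.le))
      (hint _ (Set.mem_Ici.2 ht₀.le) _ (Set.mem_Ici.2 (ht₀.le.trans ht)))]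
    linarith
  have hlog : Tendsto (fun t => (∫ s in (0:ℝ)..t₀, (r s)⁻¹) + C⁻¹ * Real.log (t / t₀))
      atTop atTop :=
    tendsto_atTop_add_const_left _ _ ((Real.tendsto_log_atTop.comp
      (tendsto_id.atTop_div_const ht₀)).const_mul_atTop (inv_pos.2 hC))
  exact tendsto_atTop_mono' atTop ((eventually_ge_atTop t₀).mono hlower) hlog

theorem inertia_pos_of_energy_pos {d n : ℕ} {m : Fin n → ℝ} (hm : ∀ i, 0 < m i)
    {q ξ : ℝ → Fin n → EuclideanSpace ℝ (Fin d)} {h : ℝ} (hh : 0 < h)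
    (hfree : ∀ t ∈ Set.Ici (0:ℝ), ∀ i j, i ≠ j → q t i ≠ q t j)
    (hcm : ∀ t ∈ Set.Ici (0:ℝ), ∑ i, m i • q t i = 0)
    (hq : ∀ t ∈ Set.Ici (0:ℝ), ∀ i, HasDerivWithinAt (fun s => q s i) (ξ t i) (Set.Ici 0) t)
    (henergy : ∀ t ∈ Set.Ici (0:ℝ), (1/2) * inertia m (ξ t) - pot m (q t) = h) :
    ∀ t ∈ Set.Ici (0:ℝ), 0 < inertia m (q t) := by
  intro t ht
  refine (inertia_nonneg (fun i => (hm i).le) _).lt_of_ne' fun hI => ?_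
  rw [inertia_eq_zero_iff hm] at hI
  have : Subsingleton (Fin n) :=
    ⟨fun i j => by_contra fun hij => hfree t ht i j hij (by simp [hI])⟩
  have hzero : ∀ s ∈ Set.Ici (0:ℝ), q s = 0 := fun s hs => funext fun i => by
    have hsum := hcm s hs
    rw [Fintype.sum_subsingleton _ i] at hsum
    exact (smul_eq_zero.1 hsum).resolve_left (hm i).ne'
  have hξ : ξ t = 0 := funext fun i =>
    (uniqueDiffOn_Ici 0 t ht).eq_deriv _ (hq t ht i)
      ((hasDerivWithinAt_const t _ 0).congr (fun s hs => by simp [hzero s hs]) (by simp [hI]))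
  have hpot : pot m (q t) = 0 := sum_eq_zero fun p hp =>
    absurd (mem_filter.1 hp).2 (by rw [Subsingleton.elim p.1 p.2]; exact lt_irrefl _)
  have := henergy t ht
  rw [hξ, hpot] at this
  simp [inertia] at this
  linarith

/-- With U bounded along the solution, r(t) ≤ C t for large t, and the rescaled time
τ(t) = ∫₀ᵗ ds/r(s) tends to +∞. -/
theorem stmt2 {d n : ℕ} (m : Fin n → ℝ) (hm : ∀ i, 0 < m i)
    (q ξ : ℝ → Fin n → EuclideanSpace ℝ (Fin d)) (h K : ℝ) (hh : 0 < h)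
    (hfree : ∀ t ∈ Set.Ici (0:ℝ), ∀ i j, i ≠ j → q t i ≠ q t j)
    (hcm : ∀ t ∈ Set.Ici (0:ℝ), ∑ i, m i • q t i = 0)
    (hq : ∀ t ∈ Set.Ici (0:ℝ), ∀ i,
      HasDerivWithinAt (fun s => q s i) (ξ t i) (Set.Ici 0) t)
    (hnewton : ∀ t ∈ Set.Ici (0:ℝ), ∀ i, HasDerivWithinAt (fun s => ξ s i)
      ((m i)⁻¹ • ∑ j ∈ Finset.univ.filter (fun j => j ≠ i),
        (m i * m j / ‖q t i - q t j‖ ^ 3) • (q t j - q t i)) (Set.Ici 0) t)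
    (henergy : ∀ t ∈ Set.Ici (0:ℝ),
      (1/2) * ∑ i, m i * ‖ξ t i‖ ^ 2 - pot m (q t) = h)
    (hUbound : ∀ t ∈ Set.Ici (0:ℝ), pot m (q t) ≤ K) :
    ∃ C > (0:ℝ), ∃ t₀ > (0:ℝ),
      (∀ t ≥ t₀, Real.sqrt (∑ i, m i * ‖q t i‖ ^ 2) ≤ C * t) ∧
      Tendsto (fun t => ∫ s in (0:ℝ)..t,
        (Real.sqrt (∑ i, m i * ‖q s i‖ ^ 2))⁻¹) atTop atTop := by
  set J : ℝ → ℝ := fun t => 2 * ∑ i, m i * ⟪q t i, ξ t i⟫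
  have hI' : ∀ t ∈ Set.Ici (0:ℝ),
      HasDerivWithinAt (fun u => inertia m (q u)) (J t) (Set.Ici 0) t :=
    fun t ht => hasDerivWithinAt_inertia m (hq t ht)
  have hJ' : ∀ t ∈ Set.Ici (0:ℝ),
      HasDerivWithinAt J (2 * (inertia m (ξ t) - pot m (q t))) (Set.Ici 0) t :=
    fun t ht => hasDerivWithinAt_lagrange_jacobi (fun i => (hm i).ne') (hq t ht) (hnewton t ht)
  have hJ'_le : ∀ t ∈ Set.Ici (0:ℝ), 2 * (inertia m (ξ t) - pot m (q t)) ≤ 4 * h + 2 * K :=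
    fun t ht => by
      have := henergy t ht
      have := hUbound t ht
      rw [inertia]
      linarith
  have hquad := le_quadratic_of_hasDerivWithinAt_of_deriv_le hI' hJ' hJ'_le
  have hIpos := inertia_pos_of_energy_pos hm hh hfree hcm hq henergy
  have hK : 0 ≤ K := (pot_nonneg (fun i => (hm i).le) _).trans (hUbound 0 Set.self_mem_Ici)
  set C := √(inertia m (q 0) + |J 0| + (4 * h + 2 * K) / 2)
  have hC : 0 < C := Real.sqrt_pos.2 (by positivity [hIpos 0 Set.self_mem_Ici])
  have hlin : ∀ t ≥ (1:ℝ), √(inertia m (q t)) ≤ C * t :=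
    fun t ht => sqrt_le_mul_of_le_quadratic (hIpos 0 Set.self_mem_Ici).le (by positivity) ht
      (hquad t (Set.mem_Ici.2 (zero_le_one.trans ht)))
  have hr : ContinuousOn (fun s => √(inertia m (q s))) (Set.Ici 0) :=
    Real.continuous_sqrt.comp_continuousOn fun t ht => (hI' t ht).continuousWithinAt
  exact ⟨C, hC, 1, one_pos, hlin, tendsto_integral_inv_atTop_of_le_mul hr
    (fun s hs => Real.sqrt_pos.2 (hIpos s hs)) hC one_pos hlin⟩
end

section
/- In the McGehee-type coordinates (ρ, s, v, w) with ρ = 1/r, q = r s, ‖s‖ = 1, ξ = v s + w, ⟨s,w⟩ = 0 (all norms and inner products with respect to the mass metric), and rescaled time dt = r dτ, Newton's equations for the n-body problem are equivalent to the system ρ' = −vρ, s' = w, v' = ‖w‖² − ρU(s), w' = ρ(∇U(s) + U(s)s) − vw − ‖w‖²s, and the energy relation becomes (1/2)v² + (1/2)‖w‖² − ρU(s) = h. -/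
/-!
The time change t = T τ has positive derivative ρ⁻¹ and is onto, so it is an increasing
bijection of ℝ with differentiable inverse; hence Newton's equations in t are equivalent to
q' = ρ⁻¹ ξ, ξ' = ρ⁻¹ ∇U(q) = ρ ∇U(s) in τ, the last step by homogeneity of ∇U of degree −2.
From ρ = 1/‖q‖, s = ρ q, v = ⟪s, ξ⟫ and w = ξ − v s the product rule gives the McGehee
system, Euler's identity ⟪∇U(s), s⟫ = −U(s) producing the term −ρ U(s) in v'; conversely
the product rule applied to q = ρ⁻¹ s and ξ = v s + w recovers the first system. The energy
is Pythagoras, ‖v s + w‖² = v² + ‖w‖².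
-/

open Function RealInnerProductSpace

theorem forall_hasDerivAt_iff_forall_hasDerivAt_comp {G : Type*} [NormedAddCommGroup G]
    [NormedSpace ℝ G] {T T' : ℝ → ℝ} (hT : ∀ τ, HasDerivAt T (T' τ) τ) (hT' : ∀ τ, 0 < T' τ)
    (hTsurj : Surjective T) {f g : ℝ → G} :
    (∀ t, HasDerivAt f (g t) t) ↔ ∀ τ, HasDerivAt (f ∘ T) (T' τ • g (T τ)) τ := by
  refine ⟨fun hf τ => (hf (T τ)).scomp τ (hT τ), fun hfT t => ?_⟩
  let e : ℝ ≃o ℝ := (strictMono_of_hasDerivAt_pos hT hT').orderIsoOfSurjective T hTsurj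
  have hTe : ∀ t, T (e.symm t) = t := e.apply_symm_apply
  have he : HasDerivAt e.symm (T' (e.symm t))⁻¹ t :=
    (hT _).of_local_left_inverse e.symm.continuous.continuousAt (hT' _).ne'
      (.of_forall hTe)
  have h := (hfT (e.symm t)).scomp t he
  rw [hTe, smul_smul, inv_mul_cancel₀ (hT' _).ne', one_smul] at h
  convert h using 1
  ext t
  simp [hTe]

section

variable {F : Type*} [NormedAddCommGroup F] [InnerProductSpace ℝ F]

theorem HasDerivAt.norm {f : ℝ → F} {f' : F} {x : ℝ} (hf : HasDerivAt f f' x) (h0 : f x ≠ 0) :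
    HasDerivAt (‖f ·‖) (⟪f x, f'⟫ / ‖f x‖) x := by
  have h := hf.norm_sq.sqrt (by positivity)
  simp only [Real.sqrt_sq (norm_nonneg _)] at h
  convert h using 1
  field_simp

theorem inner_self_eq_neg_of_hasGradientAt_of_homogeneous [CompleteSpace F] {U : F → ℝ}
    {g x : F} (hU : HasGradientAt U g x) (hhom : ∀ c : ℝ, 0 < c → U (c • x) = c⁻¹ * U x) :
    ⟪g, x⟫ = -U x := by
  have hray : HasDerivAt (fun c : ℝ => U (c • x)) ⟪g, x⟫ 1 := by
    have hU1 : HasGradientAt U g ((1 : ℝ) • x) := by rwa [one_smul]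
    simpa [comp_def] using hU1.hasFDerivAt.comp_hasDerivAt 1 ((hasDerivAt_id (1 : ℝ)).smul_const x)
  have hinv : HasDerivAt (fun c : ℝ => U (c • x)) (-U x) 1 := by
    have h := (hasDerivAt_inv (one_ne_zero' ℝ)).mul_const (U x)
    refine (h.congr_deriv (by simp)).congr_of_eventuallyEq ?_
    filter_upwards [eventually_gt_nhds one_pos] with c hc using hhom c hc
  exact hray.unique hinv

theorem norm_smul_add_sq_of_inner_eq_zero {s w : F} (c : ℝ) (hs : ‖s‖ = 1) (hsw : ⟪s, w⟫ = 0) :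
    ‖c • s + w‖ ^ 2 = c ^ 2 + ‖w‖ ^ 2 := by
  rw [norm_add_sq_real, real_inner_smul_left, hsw, norm_smul, hs, mul_one, Real.norm_eq_abs, sq_abs]
  ring

namespace McGehee

variable {ρ v u : ℝ → ℝ} {s w a : ℝ → F} {τ : ℝ}

theorem hasDerivAt_invRadius (hρ : ∀ τ, 0 < ρ τ) (hs : ∀ τ, ‖s τ‖ = 1) (hsw : ⟪s τ, w τ⟫ = 0)
    (hq : HasDerivAt (fun τ => (ρ τ)⁻¹ • s τ) ((ρ τ)⁻¹ • (v τ • s τ + w τ)) τ) :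
    HasDerivAt ρ (-(v τ * ρ τ)) τ := by
  have hnorm : ∀ τ, ‖(ρ τ)⁻¹ • s τ‖ = (ρ τ)⁻¹ := fun τ => by
    rw [norm_smul, hs, mul_one, norm_inv, Real.norm_of_nonneg (hρ τ).le]
  have hq0 : (ρ τ)⁻¹ • s τ ≠ 0 := norm_ne_zero_iff.mp (by simp [hnorm, (hρ τ).ne'])
  have h := (hq.norm hq0).inv (norm_ne_zero_iff.mpr hq0)
  refine (h.congr_of_eventuallyEq (.of_forall fun τ => by simp [hnorm])).congr_deriv ?_
  rw [hnorm, real_inner_smul_left, real_inner_smul_right, inner_add_right, real_inner_smul_right,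
    real_inner_self_eq_norm_sq, hs, hsw]
  field_simp
  ring

theorem hasDerivAt_direction (hρ : ∀ τ, ρ τ ≠ 0) (hρ' : HasDerivAt ρ (-(v τ * ρ τ)) τ)
    (hq : HasDerivAt (fun τ => (ρ τ)⁻¹ • s τ) ((ρ τ)⁻¹ • (v τ • s τ + w τ)) τ) :
    HasDerivAt s (w τ) τ := by
  have h := hρ'.smul hq
  refine (h.congr_of_eventuallyEq (.of_forall fun τ => ?_)).congr_deriv ?_
  · simp [smul_smul, mul_inv_cancel₀ (hρ τ)]
  · rw [smul_smul, smul_smul, mul_inv_cancel₀ (hρ τ), one_smul, neg_mul, mul_assoc,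
      mul_inv_cancel₀ (hρ τ), mul_one, neg_smul]
    abel

theorem hasDerivAt_radialVelocity (hs : ∀ τ, ‖s τ‖ = 1) (hsw : ∀ τ, ⟪s τ, w τ⟫ = 0)
    (heuler : ⟪a τ, s τ⟫ = -u τ) (hs' : HasDerivAt s (w τ) τ)
    (hξ : HasDerivAt (fun τ => v τ • s τ + w τ) (ρ τ • a τ) τ) :
    HasDerivAt v (‖w τ‖ ^ 2 - ρ τ * u τ) τ := by
  have hv : ∀ τ, ⟪s τ, v τ • s τ + w τ⟫ = v τ := fun τ => by
    rw [inner_add_right, real_inner_smul_right, real_inner_self_eq_norm_sq, hs, hsw]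
    ring
  refine ((hs'.inner ℝ hξ).congr_of_eventuallyEq (.of_forall fun τ => (hv τ).symm)).congr_deriv ?_
  rw [real_inner_smul_right, real_inner_comm, heuler, inner_add_right, real_inner_smul_right,
    real_inner_comm, hsw, real_inner_self_eq_norm_sq]
  ring

theorem hasDerivAt_tangentialVelocity (hs' : HasDerivAt s (w τ) τ)
    (hv' : HasDerivAt v (‖w τ‖ ^ 2 - ρ τ * u τ) τ)
    (hξ : HasDerivAt (fun τ => v τ • s τ + w τ) (ρ τ • a τ) τ) :
    HasDerivAt w (ρ τ • (a τ + u τ • s τ) - v τ • w τ - ‖w τ‖ ^ 2 • s τ) τ := by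
  refine ((hξ.sub (hv'.smul hs')).congr_of_eventuallyEq
    (.of_forall fun τ => by simp)).congr_deriv ?_
  module

theorem hasDerivAt_position (hρ : ρ τ ≠ 0) (hρ' : HasDerivAt ρ (-(v τ * ρ τ)) τ)
    (hs' : HasDerivAt s (w τ) τ) :
    HasDerivAt (fun τ => (ρ τ)⁻¹ • s τ) ((ρ τ)⁻¹ • (v τ • s τ + w τ)) τ := by
  refine ((hρ'.inv hρ).smul hs').congr_deriv ?_
  field_simp
  module

theorem hasDerivAt_velocity (hs' : HasDerivAt s (w τ) τ)
    (hv' : HasDerivAt v (‖w τ‖ ^ 2 - ρ τ * u τ) τ)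
    (hw' : HasDerivAt w (ρ τ • (a τ + u τ • s τ) - v τ • w τ - ‖w τ‖ ^ 2 • s τ) τ) :
    HasDerivAt (fun τ => v τ • s τ + w τ) (ρ τ • a τ) τ :=
  ((hv'.smul hs').add hw').congr_deriv (by module)

theorem hasDerivAt_position_velocity_iff (hρ : ∀ τ, 0 < ρ τ) (hs : ∀ τ, ‖s τ‖ = 1)
    (hsw : ∀ τ, ⟪s τ, w τ⟫ = 0) (heuler : ∀ τ, ⟪a τ, s τ⟫ = -u τ) :
    ((∀ τ, HasDerivAt (fun τ => (ρ τ)⁻¹ • s τ) ((ρ τ)⁻¹ • (v τ • s τ + w τ)) τ) ∧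
      (∀ τ, HasDerivAt (fun τ => v τ • s τ + w τ) (ρ τ • a τ) τ)) ↔
    ((∀ τ, HasDerivAt ρ (-(v τ * ρ τ)) τ) ∧ (∀ τ, HasDerivAt s (w τ) τ) ∧
      (∀ τ, HasDerivAt v (‖w τ‖ ^ 2 - ρ τ * u τ) τ) ∧
      (∀ τ, HasDerivAt w (ρ τ • (a τ + u τ • s τ) - v τ • w τ - ‖w τ‖ ^ 2 • s τ) τ)) := by
  constructor
  · rintro ⟨hq, hξ⟩
    have hρ' τ := hasDerivAt_invRadius hρ hs (hsw τ) (hq τ)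
    have hs' τ := hasDerivAt_direction (fun τ => (hρ τ).ne') (hρ' τ) (hq τ)
    have hv' τ := hasDerivAt_radialVelocity hs hsw (heuler τ) (hs' τ) (hξ τ)
    exact ⟨hρ', hs', hv', fun τ => hasDerivAt_tangentialVelocity (hs' τ) (hv' τ) (hξ τ)⟩
  · rintro ⟨hρ', hs', hv', hw'⟩
    exact ⟨fun τ => hasDerivAt_position (hρ τ).ne' (hρ' τ) (hs' τ),
      fun τ => hasDerivAt_velocity (hs' τ) (hv' τ) (hw' τ)⟩

end McGehee

end

/-- Newton's equations are equivalent to the McGehee-type system in the blown-up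
variables (ρ, s, v, w) with rescaled time dt = r dτ, and the energy relation becomes
(1/2)v² + (1/2)‖w‖² − ρU(s) = h. -/
theorem stmt3 {E : Type*} [NormedAddCommGroup E] [InnerProductSpace ℝ E] [CompleteSpace E]
    (U : E → ℝ) (gradU : E → E)
    (hgrad : ∀ x : E, x ≠ 0 → HasGradientAt U (gradU x) x)
    (hhom : ∀ c : ℝ, 0 < c → ∀ x : E, U (c • x) = c⁻¹ * U x)
    (hgradhom : ∀ c : ℝ, 0 < c → ∀ x : E, gradU (c • x) = (c ^ 2)⁻¹ • gradU x)
    (h : ℝ) (ρ v : ℝ → ℝ) (s w : ℝ → E) (T : ℝ → ℝ) (q ξ : ℝ → E)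
    (hρpos : ∀ τ, 0 < ρ τ)
    (hsnorm : ∀ τ, ‖s τ‖ = 1)
    (hsw : ∀ τ, (inner ℝ (s τ) (w τ) : ℝ) = 0)
    (hT : ∀ τ, HasDerivAt T (ρ τ)⁻¹ τ)
    (hTsurj : Function.Surjective T)
    (hqT : ∀ τ, q (T τ) = (ρ τ)⁻¹ • s τ)
    (hξT : ∀ τ, ξ (T τ) = v τ • s τ + w τ) :
    (((∀ t, HasDerivAt q (ξ t) t) ∧ (∀ t, HasDerivAt ξ (gradU (q t)) t)) ↔
      ((∀ τ, HasDerivAt ρ (-(v τ * ρ τ)) τ) ∧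
       (∀ τ, HasDerivAt s (w τ) τ) ∧
       (∀ τ, HasDerivAt v (‖w τ‖ ^ 2 - ρ τ * U (s τ)) τ) ∧
       (∀ τ, HasDerivAt w
         (ρ τ • (gradU (s τ) + U (s τ) • s τ) - v τ • w τ - ‖w τ‖ ^ 2 • s τ) τ))) ∧
    ((∀ t, (1/2) * ‖ξ t‖ ^ 2 - U (q t) = h) ↔
      (∀ τ, (1/2) * (v τ) ^ 2 + (1/2) * ‖w τ‖ ^ 2 - ρ τ * U (s τ) = h)) := by
  have hρinv τ : 0 < (ρ τ)⁻¹ := inv_pos.2 (hρpos τ)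
  have hq : q ∘ T = fun τ => (ρ τ)⁻¹ • s τ := funext hqT
  have hξ : ξ ∘ T = fun τ => v τ • s τ + w τ := funext hξT
  have hforce τ : (ρ τ)⁻¹ • gradU (q (T τ)) = ρ τ • gradU (s τ) := by
    rw [hqT, hgradhom _ (hρinv τ), inv_pow, inv_inv, smul_smul, sq,
      inv_mul_cancel_left₀ (hρpos τ).ne']
  have heuler τ : ⟪gradU (s τ), s τ⟫ = -U (s τ) :=
    inner_self_eq_neg_of_hasGradientAt_of_homogeneous
      (hgrad _ (norm_ne_zero_iff.mp (by simp [hsnorm]))) (fun c hc => hhom c hc _)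
  have henergy τ : (1/2) * ‖ξ (T τ)‖ ^ 2 - U (q (T τ)) =
      (1/2) * v τ ^ 2 + (1/2) * ‖w τ‖ ^ 2 - ρ τ * U (s τ) := by
    rw [hqT, hξT, hhom _ (hρinv τ), inv_inv,
      norm_smul_add_sq_of_inner_eq_zero _ (hsnorm τ) (hsw τ)]
    ring
  refine ⟨?_, fun H τ => henergy τ ▸ H (T τ), fun H t => ?_⟩
  · rw [forall_hasDerivAt_iff_forall_hasDerivAt_comp hT hρinv hTsurj (f := q),
      forall_hasDerivAt_iff_forall_hasDerivAt_comp hT hρinv hTsurj (f := ξ)]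
    simp only [hq, hξ, hξT, hforce]
    exact McGehee.hasDerivAt_position_velocity_iff hρpos hsnorm hsw heuler
  · obtain ⟨τ, rfl⟩ := hTsurj t
    exact (henergy τ).trans (H τ)
end

section
/- For the flow at infinity, governed by ρ' = 0, s' = w, v' = ‖w‖², w' = −vw − ‖w‖²s with energy constraint v² + ‖w‖² = 2h (h > 0), and for any unit vectors ξ, η with ⟨ξ,η⟩ = 0, the curve given by ρ(τ) = 0, v(τ) = √(2h) tanh(√(2h)τ), s(τ) = ξ sin θ(τ) + η cos θ(τ), w(τ) = √(2h) sech(√(2h)τ)(ξ cos θ(τ) − η sin θ(τ)), where θ(τ) = arctan(sinh(√(2h)τ)), is a solution. -/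
/-!
Put `f τ = c / cosh (c τ)` and `e = cos θ • ξ - sin θ • η`, so that `w = f • e`. The pair `(s, e)`
rotates at rate `θ'`: `s' = θ' • e` and `e' = -θ' • s`, while `‖e‖ = 1` by orthonormality.
Since `θ' = f` (the Gudermannian function has derivative `sech`), `s' = w` and `‖w‖² = f²`;
the remaining equations reduce to `f' = -v f`, `v' = f²` and `tanh² + sech² = 1`.
-/

open Real

section Frame

variable {F : Type*} [NormedAddCommGroup F] [NormedSpace ℝ F] (ξ η : F)
  {θ : ℝ → ℝ} {θ' τ : ℝ}

theorem hasDerivAt_sin_smul_add_cos_smul (hθ : HasDerivAt θ θ' τ) :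
    HasDerivAt (fun t => sin (θ t) • ξ + cos (θ t) • η)
      (θ' • (cos (θ τ) • ξ - sin (θ τ) • η)) τ := by
  refine (hθ.sin.smul_const ξ |>.add (hθ.cos.smul_const η)).congr_deriv ?_
  module

theorem hasDerivAt_cos_smul_sub_sin_smul (hθ : HasDerivAt θ θ' τ) :
    HasDerivAt (fun t => cos (θ t) • ξ - sin (θ t) • η)
      (-θ' • (sin (θ τ) • ξ + cos (θ τ) • η)) τ := by
  refine (hθ.cos.smul_const ξ |>.sub (hθ.sin.smul_const η)).congr_deriv ?_
  module

end Frame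

theorem norm_cos_smul_sub_sin_smul {E : Type*} [NormedAddCommGroup E] [InnerProductSpace ℝ E]
    {ξ η : E} (hξ : ‖ξ‖ = 1) (hη : ‖η‖ = 1) (hor : (inner ℝ ξ η : ℝ) = 0) (a : ℝ) :
    ‖cos a • ξ - sin a • η‖ = 1 := by
  refine (pow_eq_one_iff_of_nonneg (norm_nonneg _) two_ne_zero).1 ?_
  rw [norm_sub_sq_real, norm_smul, norm_smul, real_inner_smul_left, real_inner_smul_right,
    hξ, hη, hor]
  simp only [norm_eq_abs, mul_one, sq_abs]
  linear_combination cos_sq_add_sin_sq a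

theorem hasDerivAt_arctan_sinh_mul (c τ : ℝ) :
    HasDerivAt (fun t => arctan (sinh (c * t))) (c / cosh (c * τ)) τ := by
  refine ((hasDerivAt_id' τ).const_mul c).sinh.arctan.congr_deriv ?_
  have hC := (cosh_pos (c * τ)).ne'
  field_simp
  linear_combination c * cosh_sq (c * τ)

theorem hasDerivAt_div_cosh_mul (c τ : ℝ) :
    HasDerivAt (fun t => c / cosh (c * t)) (-(c * tanh (c * τ)) * (c / cosh (c * τ))) τ := by
  refine (((hasDerivAt_id' τ).const_mul c).cosh.inv (cosh_pos _).ne' |>.const_mul c)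
    |>.congr_deriv ?_
  have hC := (cosh_pos (c * τ)).ne'
  rw [tanh_eq_sinh_div_cosh]
  field_simp

theorem hasDerivAt_mul_tanh_mul (c τ : ℝ) :
    HasDerivAt (fun t => c * tanh (c * t)) ((c / cosh (c * τ)) ^ 2) τ := by
  have hlin := (hasDerivAt_id' τ).const_mul c
  simp only [tanh_eq_sinh_div_cosh]
  refine (hlin.sinh.div hlin.cosh (cosh_pos _).ne' |>.const_mul c).congr_deriv ?_
  have hC := (cosh_pos (c * τ)).ne'
  field_simp
  linear_combination c ^ 2 * cosh_sq (c * τ)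

theorem mul_tanh_sq_add_div_cosh_sq (c x : ℝ) : (c * tanh x) ^ 2 + (c / cosh x) ^ 2 = c ^ 2 := by
  have hC := (cosh_pos x).ne'
  rw [tanh_eq_sinh_div_cosh]
  field_simp
  linear_combination (-c ^ 2) * cosh_sq x

/-- The explicit great-circle curve solves the equations of the flow at infinity
and satisfies the energy constraint v² + ‖w‖² = 2h. -/
theorem stmt4 {E : Type*} [NormedAddCommGroup E] [InnerProductSpace ℝ E]
    (ξ η : E) (hξ : ‖ξ‖ = 1) (hη : ‖η‖ = 1) (hor : (inner ℝ ξ η : ℝ) = 0)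
    (h : ℝ) (hh : 0 < h) :
    let c := Real.sqrt (2 * h)
    let θ := fun τ : ℝ => Real.arctan (Real.sinh (c * τ))
    let v := fun τ : ℝ => c * Real.tanh (c * τ)
    let s := fun τ : ℝ => Real.sin (θ τ) • ξ + Real.cos (θ τ) • η
    let w := fun τ : ℝ =>
      (c / Real.cosh (c * τ)) • (Real.cos (θ τ) • ξ - Real.sin (θ τ) • η)
    ∀ τ : ℝ,
      HasDerivAt (fun _ : ℝ => (0:ℝ)) 0 τ ∧
      HasDerivAt s (w τ) τ ∧
      HasDerivAt v (‖w τ‖ ^ 2) τ ∧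
      HasDerivAt w (-(v τ) • w τ - ‖w τ‖ ^ 2 • s τ) τ ∧
      (v τ) ^ 2 + ‖w τ‖ ^ 2 = 2 * h := by
  intro c θ v s w τ
  have hθ := hasDerivAt_arctan_sinh_mul c τ
  have hw_sq : ‖w τ‖ ^ 2 = (c / cosh (c * τ)) ^ 2 := by
    simp only [w, norm_smul, norm_cos_smul_sub_sin_smul hξ hη hor, mul_one, norm_eq_abs, sq_abs]
  refine ⟨hasDerivAt_const τ 0, hasDerivAt_sin_smul_add_cos_smul ξ η hθ,
    hw_sq ▸ hasDerivAt_mul_tanh_mul c τ, ?_, ?_⟩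
  · refine ((hasDerivAt_div_cosh_mul c τ).smul
      (hasDerivAt_cos_smul_sub_sin_smul ξ η hθ)).congr_deriv ?_
    rw [hw_sq]
    module
  · rw [hw_sq, mul_tanh_sq_add_div_cosh_sq, sq_sqrt (by positivity)]
end

section
/- The solution at infinity s(τ) = ξ sin θ(τ) + η cos θ(τ), v(τ) = √(2h) tanh(√(2h)τ) with θ(τ) = arctan(sinh(√(2h)τ)) is heteroclinic: as τ → −∞ it converges to the equilibrium (ρ,s,v,w) = (0, −ξ, −√(2h), 0), and as τ → +∞ it converges to (0, ξ, √(2h), 0). -/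
/-!
The angle `θ = arctan ∘ sinh` is the Gudermannian function, for which `sin θ = tanh` and
`cos θ = sech`. Hence `s`, `v` and `w` are all continuous functions of `θ(τ)`, and the limits
follow from `θ(τ) → ±π/2` as `τ → ±∞`.
-/

open Filter Topology

namespace Real

theorem sin_arctan_sinh (x : ℝ) : sin (arctan (sinh x)) = tanh x := by
  rw [sin_arctan, ← cosh_arsinh, arsinh_sinh, tanh_eq_sinh_div_cosh]

theorem cos_arctan_sinh (x : ℝ) : cos (arctan (sinh x)) = (cosh x)⁻¹ := by
  rw [cos_arctan, ← cosh_arsinh, arsinh_sinh, one_div]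

theorem tendsto_arctan_sinh_atTop : Tendsto (fun x ↦ arctan (sinh x)) atTop (𝓝 (π / 2)) :=
  tendsto_nhds_of_tendsto_nhdsWithin (tendsto_arctan_atTop.comp sinhOrderIso.tendsto_atTop)

theorem tendsto_arctan_sinh_atBot :
    Tendsto (fun x ↦ arctan (sinh x)) atBot (𝓝 (-(π / 2))) :=
  tendsto_nhds_of_tendsto_nhdsWithin (tendsto_arctan_atBot.comp sinhOrderIso.tendsto_atBot)

end Real

open Real in
theorem stmt5_general {E : Type*} [NormedAddCommGroup E] [InnerProductSpace ℝ E]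
    (ξ η : E)
    (h : ℝ) (hh : 0 < h) :
    let c := Real.sqrt (2 * h)
    let θ := fun τ : ℝ => Real.arctan (Real.sinh (c * τ))
    let v := fun τ : ℝ => c * Real.tanh (c * τ)
    let s := fun τ : ℝ => Real.sin (θ τ) • ξ + Real.cos (θ τ) • η
    let w := fun τ : ℝ =>
      (c / Real.cosh (c * τ)) • (Real.cos (θ τ) • ξ - Real.sin (θ τ) • η)
    (Tendsto s atBot (nhds (-ξ)) ∧ Tendsto v atBot (nhds (-c)) ∧
      Tendsto w atBot (nhds 0)) ∧
    (Tendsto s atTop (nhds ξ) ∧ Tendsto v atTop (nhds c) ∧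
      Tendsto w atTop (nhds 0)) := by
  intro c θ v s w
  have hc : 0 < c := sqrt_pos.2 (by positivity)
  have hv : v = fun τ ↦ c * sin (θ τ) := by simp only [v, θ, sin_arctan_sinh]
  have hw : w = fun τ ↦ (c * cos (θ τ)) • (cos (θ τ) • ξ - sin (θ τ) • η) := by
    simp only [w, θ, cos_arctan_sinh, div_eq_mul_inv]
  have limits : ∀ {l : Filter ℝ} {θ₀ : ℝ}, Tendsto θ l (𝓝 θ₀) →
      Tendsto s l (𝓝 (sin θ₀ • ξ + cos θ₀ • η)) ∧ Tendsto v l (𝓝 (c * sin θ₀)) ∧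
        Tendsto w l (𝓝 ((c * cos θ₀) • (cos θ₀ • ξ - sin θ₀ • η))) := fun hθ ↦ by
    rw [hv, hw]
    exact ⟨((by fun_prop : Continuous fun t : ℝ ↦ sin t • ξ + cos t • η).tendsto _).comp hθ,
      ((by fun_prop : Continuous fun t : ℝ ↦ c * sin t).tendsto _).comp hθ,
      ((by fun_prop : Continuous fun t : ℝ ↦
        (c * cos t) • (cos t • ξ - sin t • η)).tendsto _).comp hθ⟩
  have at_bot := limits (tendsto_arctan_sinh_atBot.comp (tendsto_id.const_mul_atBot hc))
  have at_top := limits (tendsto_arctan_sinh_atTop.comp (tendsto_id.const_mul_atTop hc))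
  simp only [sin_neg, cos_neg, sin_pi_div_two, cos_pi_div_two, neg_one_smul, one_smul,
    zero_smul, add_zero, mul_neg_one, mul_one, mul_zero] at at_bot at_top
  exact ⟨at_bot, at_top⟩

/-- The great-circle solution at infinity is heteroclinic from
(0, −ξ, −√(2h), 0) to (0, ξ, √(2h), 0). -/
theorem stmt5 {E : Type*} [NormedAddCommGroup E] [InnerProductSpace ℝ E]
    (ξ η : E) (hξ : ‖ξ‖ = 1) (hη : ‖η‖ = 1) (hor : (inner ℝ ξ η : ℝ) = 0)
    (h : ℝ) (hh : 0 < h) :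
    let c := Real.sqrt (2 * h)
    let θ := fun τ : ℝ => Real.arctan (Real.sinh (c * τ))
    let v := fun τ : ℝ => c * Real.tanh (c * τ)
    let s := fun τ : ℝ => Real.sin (θ τ) • ξ + Real.cos (θ τ) • η
    let w := fun τ : ℝ =>
      (c / Real.cosh (c * τ)) • (Real.cos (θ τ) • ξ - Real.sin (θ τ) • η)
    (Tendsto s atBot (nhds (-ξ)) ∧ Tendsto v atBot (nhds (-c)) ∧
      Tendsto w atBot (nhds 0)) ∧
    (Tendsto s atTop (nhds ξ) ∧ Tendsto v atTop (nhds c) ∧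
      Tendsto w atTop (nhds 0)) :=
  stmt5_general ξ η h hh
end

section
/- For the hyperbolic Kepler orbit, with s(τ) = q(τ)/r(τ), q(τ) = (ae − a cosh(ωτ), a√(e²−1) sinh(ωτ)), r(τ) = a√μ(e cosh(ωτ) − 1), and s₀' = (1/(e√μ))(−1, √(e²−1)), the limit s₁' = lim_{τ→+∞} e^{ωτ}(s(τ) − s₀') exists and equals (2/(e²√μ))(e²−1, √(e²−1)). -/
/-!
Factoring `a` and `√μ` out of `s(τ) - s₀'` and substituting `t = ωτ` leaves a function of `e`,
`b = √(e² - 1)` and `t` alone. Multiplying numerator and denominator by `e^{-t}` makes every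
entry of `e^t (s - s₀')` a rational function of `e^{-t}` that is regular at `e^{-t} = 0`, where
it takes the claimed value.
-/

open Filter Topology Real

theorem tendsto_exp_sub_div_mul_cosh_sub_one {e : ℝ} (he : e ≠ 0) (c : ℝ) :
    Tendsto (fun t => (exp t - c) / (e * cosh t - 1)) atTop (𝓝 (2 / e)) := by
  have hrational : ContinuousAt (fun u : ℝ => (1 - c * u) / (e / 2 * (1 + u ^ 2) - u)) 0 :=
    ContinuousAt.div (by fun_prop) (by fun_prop) (by simpa using he)
  have hlim := hrational.tendsto.comp tendsto_exp_neg_atTop_nhds_zero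
  convert hlim using 2 with t
  · have hexp : exp (-t) ≠ 0 := (exp_pos _).ne'
    rw [Function.comp_apply, ← mul_div_mul_right _ _ hexp, cosh_eq]
    congr 1 <;> rw [exp_neg] <;> field_simp
  · simp

theorem tendsto_exp_smul_sub_normalizedHyperbola {e : ℝ} (he : e ≠ 0) (b : ℝ) :
    Tendsto
      (fun t => exp t • ((e * cosh t - 1)⁻¹ • (e - cosh t, b * sinh t) - e⁻¹ • ((-1 : ℝ), b)))
      atTop (𝓝 ((2 / e ^ 2) • (e ^ 2 - 1, b))) := by
  have hfirst := (tendsto_exp_sub_div_mul_cosh_sub_one he 0).const_mul ((e ^ 2 - 1) / e)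
  have hsecond := (tendsto_exp_sub_div_mul_cosh_sub_one he e).const_mul (b / e)
  have hden : ∀ᶠ t in atTop, e * cosh t - 1 ≠ 0 := by
    filter_upwards [(tendsto_exp_sub_div_mul_cosh_sub_one he 0).eventually_ne
      (div_ne_zero two_ne_zero he)] with t ht
    exact (div_ne_zero_iff.mp ht).2
  convert (hfirst.prodMk_nhds hsecond).congr' ?_ using 2
  · simp only [Prod.smul_mk, smul_eq_mul, Prod.mk.injEq]
    constructor <;> field_simp
  · filter_upwards [hden] with t ht
    have hsinh : sinh t = cosh t - exp (-t) := by rw [← cosh_sub_sinh]; ring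
    simp only [Prod.smul_mk, smul_eq_mul, Prod.mk_sub_mk, Prod.mk.injEq, hsinh, exp_neg]
    constructor <;> field_simp <;> ring

theorem stmt12_general (a e μ ω : ℝ) (ha : 0 < a) (he : 1 < e) (hω : 0 < ω) :
    let q : ℝ → ℝ × ℝ := fun τ =>
      (a * e - a * Real.cosh (ω * τ), a * Real.sqrt (e ^ 2 - 1) * Real.sinh (ω * τ))
    let r : ℝ → ℝ := fun τ => a * Real.sqrt μ * (e * Real.cosh (ω * τ) - 1)
    let s : ℝ → ℝ × ℝ := fun τ => (r τ)⁻¹ • q τ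
    let s₀' : ℝ × ℝ := (e * Real.sqrt μ)⁻¹ • ((-1 : ℝ), Real.sqrt (e ^ 2 - 1))
    Tendsto (fun τ => Real.exp (ω * τ) • (s τ - s₀')) atTop
      (nhds ((2 / (e ^ 2 * Real.sqrt μ)) • ((e ^ 2 - 1 : ℝ), Real.sqrt (e ^ 2 - 1)))) := by
  intro q r s s₀'
  have hnormalized :=
    ((tendsto_exp_smul_sub_normalizedHyperbola (zero_lt_one.trans he).ne' √(e ^ 2 - 1)).comp
      (tendsto_id.const_mul_atTop hω)).const_smul (√μ)⁻¹
  convert hnormalized using 2 with τ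
  · simp only [s, q, r, s₀', Function.comp_apply, id, Prod.smul_mk, smul_eq_mul, Prod.mk_sub_mk,
      Prod.mk.injEq, mul_inv]
    constructor <;> field_simp
  · rw [smul_smul]
    ring_nf

/-- The rescaled limit s₁' = lim_{τ→+∞} e^{ωτ}(s(τ) − s₀') for the hyperbolic Kepler
orbit equals (2/(e²√μ))(e²−1, √(e²−1)). -/
theorem stmt12 (a e μ ω : ℝ) (ha : 0 < a) (he : 1 < e) (hμ : 0 < μ) (hω : 0 < ω) :
    let q : ℝ → ℝ × ℝ := fun τ =>
      (a * e - a * Real.cosh (ω * τ), a * Real.sqrt (e ^ 2 - 1) * Real.sinh (ω * τ))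
    let r : ℝ → ℝ := fun τ => a * Real.sqrt μ * (e * Real.cosh (ω * τ) - 1)
    let s : ℝ → ℝ × ℝ := fun τ => (r τ)⁻¹ • q τ
    let s₀' : ℝ × ℝ := (e * Real.sqrt μ)⁻¹ • ((-1 : ℝ), Real.sqrt (e ^ 2 - 1))
    Tendsto (fun τ => Real.exp (ω * τ) • (s τ - s₀')) atTop
      (nhds ((2 / (e ^ 2 * Real.sqrt μ)) • ((e ^ 2 - 1 : ℝ), Real.sqrt (e ^ 2 - 1)))) :=
  stmt12_general a e μ ω ha he hω
end

section
/- Kernel of the averaged Hessian: for a planar, non-collinear, collision-free configuration ξ ∈ (ℝ²)^n, the symmetric bilinear form Q(β) = 2Σ_{i<j} (m_i m_j / r_{ij}³)(β_{ij}·v_{ij})², where β_{ij} = β_i − β_j, r_{ij} = |ξ_i − ξ_j|, u_{ij} = (ξ_i − ξ_j)/r_{ij} and v_{ij} = u_{ij}⊥, has null space exactly the 3-dimensional span of ξ, (e₁, e₁, …, e₁), and (e₂, e₂, …, e₂), where e₁, e₂ are the standard basis vectors of ℝ². -/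
/-!
Since the masses are positive, `Q β = 0` says exactly that every `β i - β j` is parallel to
`ξ i - ξ j`, i.e. that `β` is a parallel redrawing of the complete framework on `ξ`.
Dilations and translations `β i = s • ξ i + c` are such redrawings. Conversely, on a
non-degenerate triangle `ξ a, ξ b, ξ c` a redrawing agrees with one of them, and the difference
`γ` vanishes everywhere: if `γ i ≠ 0`, each edge condition for `(i, a)`, `(i, b)`, `(i, c)`
puts `ξ a, ξ b, ξ c` on the line through `ξ i` in direction `γ i`. As `ξ` is not constant,
`(s, c) ↦ s • ξ + c` is injective, so the kernel has dimension `1 + 2 = 3`.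
-/

open Finset

local notation "ℝ²" => EuclideanSpace ℝ (Fin 2)

namespace PlanarRedrawing

def cross (x y : ℝ²) : ℝ := x 0 * y 1 - x 1 * y 0

def rot (p : ℝ²) : ℝ² := WithLp.toLp 2 ![-(p 1), p 0]

lemma cross_smul_right (x y : ℝ²) (t : ℝ) : cross x (t • y) = t * cross x y := by
  simp only [cross, PiLp.smul_apply, smul_eq_mul]; ring

lemma cross_sub_right (x y z : ℝ²) : cross x (y - z) = cross x y - cross x z := by
  simp only [cross, PiLp.sub_apply]; ring

lemma cross_neg_neg (x y : ℝ²) : cross (-x) (-y) = cross x y := by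
  simp only [cross, PiLp.neg_apply]; ring

lemma cross_self (x : ℝ²) : cross x x = 0 := by
  simp only [cross]; ring

lemma left_ne_zero_of_cross {x y : ℝ²} (h : cross x y ≠ 0) : x ≠ 0 := by
  rintro rfl; simp [cross] at h

lemma right_ne_zero_of_cross {x y : ℝ²} (h : cross x y ≠ 0) : y ≠ 0 := by
  rintro rfl; simp [cross] at h

lemma inner_rot (x d : ℝ²) : inner ℝ x (rot d) = cross d x := by
  simp [rot, cross, PiLp.inner_apply, Fin.sum_univ_two]; ring

lemma exists_eq_smul_of_cross_eq_zero {x y : ℝ²} (hx : x ≠ 0) (h : cross x y = 0) :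
    ∃ t : ℝ, y = t • x := by
  have hn : x 0 ^ 2 + x 1 ^ 2 ≠ 0 := by
    contrapose! hx
    ext i
    fin_cases i <;> simp only [Fin.zero_eta, Fin.mk_one, Fin.isValue, PiLp.zero_apply] <;>
      nlinarith [sq_nonneg (x 0), sq_nonneg (x 1)]
  refine ⟨(x 0 * y 0 + x 1 * y 1) / (x 0 ^ 2 + x 1 ^ 2), ?_⟩
  unfold cross at h
  ext i
  fin_cases i <;>
    simp only [Fin.zero_eta, Fin.mk_one, Fin.isValue, PiLp.smul_apply, smul_eq_mul] <;> field_simp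
  · linear_combination -x 1 * h
  · linear_combination x 0 * h

lemma cross_eq_zero_of_cross_eq_zero {w x y : ℝ²} (hw : w ≠ 0) (hx : cross x w = 0)
    (hy : cross y w = 0) : cross x y = 0 := by
  have h0 : cross x y * w 0 = 0 := by
    simp only [cross] at *; linear_combination y 0 * hx - x 0 * hy
  have h1 : cross x y * w 1 = 0 := by
    simp only [cross] at *; linear_combination y 1 * hx - x 1 * hy
  by_contra hxy
  exact hw (by ext i; fin_cases i <;> simp_all)

lemma weighted_inner_rot_sq_eq_zero_iff {w : ℝ} (hw : 0 < w) (d x : ℝ²) :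
    w / ‖d‖ ^ 3 * inner ℝ x (‖d‖⁻¹ • rot d) ^ 2 = 0 ↔ cross d x = 0 := by
  rcases eq_or_ne d 0 with rfl | hd
  -- coincident points: the junk value `‖0‖⁻¹ = 0` makes the term vanish
  · simp [cross]
  · simp [inner_smul_right, inner_rot, hw.ne', hd]

section Redrawing

variable {ι : Type*}

def IsParallelRedrawing (ξ β : ι → ℝ²) : Prop :=
  ∀ i j, cross (ξ i - ξ j) (β i - β j) = 0

variable {ξ β γ : ι → ℝ²}

lemma isParallelRedrawing_smul_add (s : ℝ) (c : ℝ²) :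
    IsParallelRedrawing ξ (fun i => s • ξ i + c) := by
  intro i j
  rw [add_sub_add_right_eq_sub, ← smul_sub, cross_smul_right, cross_self, mul_zero]

lemma IsParallelRedrawing.sub (hβ : IsParallelRedrawing ξ β) (hγ : IsParallelRedrawing ξ γ) :
    IsParallelRedrawing ξ (β - γ) := by
  intro i j
  rw [Pi.sub_apply, Pi.sub_apply, sub_sub_sub_comm, cross_sub_right, hβ, hγ, sub_zero]

lemma isParallelRedrawing_iff_forall_lt [LinearOrder ι] :
    IsParallelRedrawing ξ β ↔ ∀ i j, i < j → cross (ξ i - ξ j) (β i - β j) = 0 := by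
  refine ⟨fun h i j _ => h i j, fun h i j => ?_⟩
  rcases lt_trichotomy i j with hij | rfl | hij
  · exact h i j hij
  · simp [cross]
  · rw [← cross_neg_neg, neg_sub, neg_sub]
    exact h j i hij

lemma IsParallelRedrawing.exists_smul_of_cross_ne_zero (hβ : IsParallelRedrawing ξ β)
    {a b c : ι} (habc : cross (ξ b - ξ a) (ξ c - ξ a) ≠ 0) :
    ∃ s : ℝ, β b - β a = s • (ξ b - ξ a) ∧ β c - β a = s • (ξ c - ξ a) := by
  obtain ⟨s, hs⟩ := exists_eq_smul_of_cross_eq_zero (left_ne_zero_of_cross habc) (hβ b a)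
  obtain ⟨t, ht⟩ := exists_eq_smul_of_cross_eq_zero (right_ne_zero_of_cross habc) (hβ c a)
  have hst : (s - t) * cross (ξ b - ξ a) (ξ c - ξ a) = 0 := by
    have hcb := hβ c b
    rw [show ξ c - ξ b = (ξ c - ξ a) - (ξ b - ξ a) by abel,
      show β c - β b = (β c - β a) - (β b - β a) by abel, hs, ht] at hcb
    rw [← hcb]
    simp only [cross, PiLp.sub_apply, PiLp.smul_apply, smul_eq_mul]; ring
  obtain rfl : s = t := sub_eq_zero.1 ((mul_eq_zero.1 hst).resolve_right habc)
  exact ⟨s, hs, ht⟩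

lemma IsParallelRedrawing.eq_zero_of_cross_ne_zero (hγ : IsParallelRedrawing ξ γ)
    {a b c : ι} (habc : cross (ξ b - ξ a) (ξ c - ξ a) ≠ 0)
    (ha : γ a = 0) (hb : γ b = 0) (hc : γ c = 0) (i : ι) : γ i = 0 := by
  by_contra hi
  have hline : ∀ j, γ j = 0 → cross (ξ i - ξ j) (γ i) = 0 := fun j hj => by
    simpa [hj] using hγ i j
  have hab := cross_eq_zero_of_cross_eq_zero hi (hline a ha) (hline b hb)
  have hac := cross_eq_zero_of_cross_eq_zero hi (hline a ha) (hline c hc)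
  have hbc := cross_eq_zero_of_cross_eq_zero hi (hline b hb) (hline c hc)
  apply habc
  simp only [cross, PiLp.sub_apply] at hab hac hbc ⊢
  linear_combination hab - hac + hbc

lemma exists_cross_ne_zero (hξ : ¬ ∃ p v : ℝ², ∀ i, ∃ t : ℝ, ξ i = p + t • v) :
    ∃ a b c, cross (ξ b - ξ a) (ξ c - ξ a) ≠ 0 := by
  by_contra! h
  rcases isEmpty_or_nonempty ι with hι | ⟨⟨a⟩⟩
  · exact hξ ⟨0, 0, isEmptyElim⟩
  by_cases hb : ∃ b, ξ b ≠ ξ a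
  · obtain ⟨b, hb⟩ := hb
    refine hξ ⟨ξ a, ξ b - ξ a, fun i => ?_⟩
    obtain ⟨t, ht⟩ := exists_eq_smul_of_cross_eq_zero (sub_ne_zero.2 hb) (h a b i)
    exact ⟨t, by rw [← ht]; abel⟩
  · push Not at hb
    exact hξ ⟨ξ a, 0, fun i => ⟨0, by simp [hb i]⟩⟩

theorem IsParallelRedrawing.exists_eq_smul_add (hβ : IsParallelRedrawing ξ β)
    (hξ : ¬ ∃ p v : ℝ², ∀ i, ∃ t : ℝ, ξ i = p + t • v) :
    ∃ (s : ℝ) (c : ℝ²), ∀ i, β i = s • ξ i + c := by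
  obtain ⟨a, b, c, habc⟩ := exists_cross_ne_zero hξ
  obtain ⟨s, hb, hc⟩ := hβ.exists_smul_of_cross_ne_zero habc
  have hγ := hβ.sub (isParallelRedrawing_smul_add s (β a - s • ξ a))
  refine ⟨s, β a - s • ξ a, fun i =>
    sub_eq_zero.1 <| hγ.eq_zero_of_cross_ne_zero habc ?_ ?_ ?_ i⟩
  · simp
  · simp only [Pi.sub_apply]; linear_combination (norm := module) hb
  · simp only [Pi.sub_apply]; linear_combination (norm := module) hc

def trivialRedrawing (ξ : ι → ℝ²) : ℝ × ℝ² →ₗ[ℝ] ι → ℝ² where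
  toFun sc i := sc.1 • ξ i + sc.2
  map_add' _ _ := by
    ext1 i
    simp only [Prod.fst_add, Prod.snd_add, add_smul, Pi.add_apply]
    abel
  map_smul' _ _ := by ext1 i; simp [smul_add, smul_smul]

lemma isParallelRedrawing_iff_mem_range
    (hξ : ¬ ∃ p v : ℝ², ∀ i, ∃ t : ℝ, ξ i = p + t • v) :
    IsParallelRedrawing ξ β ↔ β ∈ LinearMap.range (trivialRedrawing ξ) := by
  constructor
  · intro hβ
    obtain ⟨s, c, h⟩ := hβ.exists_eq_smul_add hξ
    exact ⟨(s, c), funext fun i => (h i).symm⟩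
  · rintro ⟨⟨s, c⟩, rfl⟩
    exact isParallelRedrawing_smul_add s c

lemma trivialRedrawing_injective {a b : ι} (hab : ξ a ≠ ξ b) :
    Function.Injective (trivialRedrawing ξ) := by
  rw [← LinearMap.ker_eq_bot, LinearMap.ker_eq_bot']
  rintro ⟨s, c⟩ h
  have ha : s • ξ a + c = 0 := congrFun h a
  have hb : s • ξ b + c = 0 := congrFun h b
  have hs : s = 0 := by
    have : s • (ξ a - ξ b) = 0 := by linear_combination (norm := module) ha - hb
    exact (smul_eq_zero.1 this).resolve_right (sub_ne_zero.2 hab)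
  subst hs
  simpa using ha

lemma span_eq_range_trivialRedrawing (ξ : ι → ℝ²) :
    Submodule.span ℝ
      {ξ, fun _ => EuclideanSpace.single 0 1, fun _ => EuclideanSpace.single 1 1} =
      LinearMap.range (trivialRedrawing ξ) := by
  ext β
  rw [Submodule.mem_span_insert, LinearMap.mem_range]
  simp_rw [Submodule.mem_span_pair]
  constructor
  · rintro ⟨s, _, ⟨c₁, c₂, rfl⟩, rfl⟩
    refine ⟨(s, c₁ • EuclideanSpace.single 0 1 + c₂ • EuclideanSpace.single 1 1), ?_⟩
    ext1 i
    simp [trivialRedrawing]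
  · rintro ⟨⟨s, c⟩, rfl⟩
    refine ⟨s, _, ⟨c 0, c 1, rfl⟩, ?_⟩
    ext i k
    fin_cases k <;> simp [trivialRedrawing]

noncomputable def averagedHessian [Fintype ι] [LinearOrder ι] (m : ι → ℝ) (ξ β : ι → ℝ²) : ℝ :=
  2 * ∑ p ∈ univ.filter (fun p : ι × ι => p.1 < p.2),
    (m p.1 * m p.2 / ‖ξ p.1 - ξ p.2‖ ^ 3) *
      inner ℝ (β p.1 - β p.2) (‖ξ p.1 - ξ p.2‖⁻¹ • rot (ξ p.1 - ξ p.2)) ^ 2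

lemma averagedHessian_eq_zero_iff [Fintype ι] [LinearOrder ι] {m : ι → ℝ}
    (hm : ∀ i, 0 < m i) :
    averagedHessian m ξ β = 0 ↔ IsParallelRedrawing ξ β := by
  have hterm (i j : ι) :=
    weighted_inner_rot_sq_eq_zero_iff (mul_pos (hm i) (hm j)) (ξ i - ξ j) (β i - β j)
  rw [averagedHessian, mul_eq_zero, or_iff_right two_ne_zero,
    sum_eq_zero_iff_of_nonneg fun p _ => by have := hm p.1; have := hm p.2; positivity]
  simp [hterm, isParallelRedrawing_iff_forall_lt]

end Redrawing

end PlanarRedrawing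

open PlanarRedrawing

theorem stmt17_general {n : ℕ} (m : Fin n → ℝ) (hm : ∀ i, 0 < m i)
    (ξ : Fin n → EuclideanSpace ℝ (Fin 2))
    (hnoncol : ¬ ∃ (a b : EuclideanSpace ℝ (Fin 2)), ∀ i, ∃ t : ℝ, ξ i = a + t • b)
    (perp : EuclideanSpace ℝ (Fin 2) → EuclideanSpace ℝ (Fin 2))
    (hperp : ∀ p, perp p = (WithLp.toLp 2 ![-(p 1), p 0] : EuclideanSpace ℝ (Fin 2))) :
    let Q : (Fin n → EuclideanSpace ℝ (Fin 2)) → ℝ := fun β =>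
      2 * ∑ p ∈ Finset.univ.filter (fun p : Fin n × Fin n => p.1 < p.2),
        (m p.1 * m p.2 / ‖ξ p.1 - ξ p.2‖ ^ 3) *
          (inner ℝ (β p.1 - β p.2) ((‖ξ p.1 - ξ p.2‖)⁻¹ • perp (ξ p.1 - ξ p.2)) : ℝ) ^ 2
    let e₁ : EuclideanSpace ℝ (Fin 2) := EuclideanSpace.single 0 1
    let e₂ : EuclideanSpace ℝ (Fin 2) := EuclideanSpace.single 1 1
    (∀ β, Q β = 0 ↔ β ∈ Submodule.span ℝ
      ({ξ, fun _ => e₁, fun _ => e₂} : Set (Fin n → EuclideanSpace ℝ (Fin 2)))) ∧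
    Module.finrank ℝ ↥(Submodule.span ℝ
      ({ξ, fun _ => e₁, fun _ => e₂} : Set (Fin n → EuclideanSpace ℝ (Fin 2)))) = 3 := by
  intro Q e₁ e₂
  obtain rfl : perp = rot := funext hperp
  obtain ⟨a, b, _, habc⟩ := exists_cross_ne_zero hnoncol
  have hab : ξ b ≠ ξ a := sub_ne_zero.1 (left_ne_zero_of_cross habc)
  rw [span_eq_range_trivialRedrawing]
  refine ⟨fun β => (averagedHessian_eq_zero_iff hm).trans
    (isParallelRedrawing_iff_mem_range hnoncol), ?_⟩
  rw [LinearMap.finrank_range_of_inj (trivialRedrawing_injective hab)]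
  simp

/-- Kernel of the averaged Hessian form for a planar, non-collinear, collision-free
configuration: exactly the 3-dimensional span of ξ and the two translations. -/
theorem stmt17 {n : ℕ} (hn : 3 ≤ n) (m : Fin n → ℝ) (hm : ∀ i, 0 < m i)
    (ξ : Fin n → EuclideanSpace ℝ (Fin 2))
    (hfree : ∀ i j, i ≠ j → ξ i ≠ ξ j)
    (hnoncol : ¬ ∃ (a b : EuclideanSpace ℝ (Fin 2)), ∀ i, ∃ t : ℝ, ξ i = a + t • b)
    (perp : EuclideanSpace ℝ (Fin 2) → EuclideanSpace ℝ (Fin 2))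
    (hperp : ∀ p, perp p = (WithLp.toLp 2 ![-(p 1), p 0] : EuclideanSpace ℝ (Fin 2))) :
    let Q : (Fin n → EuclideanSpace ℝ (Fin 2)) → ℝ := fun β =>
      2 * ∑ p ∈ Finset.univ.filter (fun p : Fin n × Fin n => p.1 < p.2),
        (m p.1 * m p.2 / ‖ξ p.1 - ξ p.2‖ ^ 3) *
          (inner ℝ (β p.1 - β p.2) ((‖ξ p.1 - ξ p.2‖)⁻¹ • perp (ξ p.1 - ξ p.2)) : ℝ) ^ 2
    let e₁ : EuclideanSpace ℝ (Fin 2) := EuclideanSpace.single 0 1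
    let e₂ : EuclideanSpace ℝ (Fin 2) := EuclideanSpace.single 1 1
    (∀ β, Q β = 0 ↔ β ∈ Submodule.span ℝ
      ({ξ, fun _ => e₁, fun _ => e₂} : Set (Fin n → EuclideanSpace ℝ (Fin 2)))) ∧
    Module.finrank ℝ ↥(Submodule.span ℝ
      ({ξ, fun _ => e₁, fun _ => e₂} : Set (Fin n → EuclideanSpace ℝ (Fin 2)))) = 3 :=
  stmt17_general m hm ξ hnoncol perp hperp
end

section
/- The change of variables for the exponential of the rescaled time: if t(τ) = a e^{v₀τ} − bτ + c + E(τ) where a > 0, v₀ > 0, b, c ∈ ℝ and E(τ) = O(e^{−v₀τ}·τ) as τ → +∞, then τ(t) = (1/v₀) log t − (log a)/v₀ + o(1) and e^{v₀τ} = t/a + (b/(a v₀)) log t + O(1) as t → +∞. -/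
/-!
Write `t τ = a e^{v₀τ} + R τ` with `R τ = -bτ + c + Err τ = o(e^{v₀τ})`. Then
`log t - v₀τ = log (a + R τ e^{-v₀τ}) → log a`, which is the first claim after dividing by `v₀`.
Substituting `t` exactly gives
`e^{v₀τ} - t/a - (b/(a v₀)) log t = -(c + Err)/a - (b/(a v₀)) (log t - v₀τ)`,
and the right-hand side converges, hence is bounded.
-/

open Filter Asymptotics Topology Real

lemma isLittleO_id_exp_mul_atTop {v : ℝ} (hv : 0 < v) :
    (fun τ : ℝ => τ) =o[atTop] fun τ => exp (v * τ) := by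
  simpa using isLittleO_pow_exp_pos_mul_atTop 1 hv

lemma tendsto_exp_neg_mul_mul_self_atTop {v : ℝ} (hv : 0 < v) :
    Tendsto (fun τ => exp (-v * τ) * τ) atTop (𝓝 0) := by
  refine (isLittleO_id_exp_mul_atTop hv).tendsto_div_nhds_zero.congr fun τ => ?_
  rw [neg_mul, exp_neg, div_eq_inv_mul]

lemma tendsto_log_sub_mul_of_eq_add_isLittleO {l : Filter ℝ} {a v : ℝ} {f R : ℝ → ℝ}
    (ha : 0 < a) (hf : ∀ τ, f τ = a * exp (v * τ) + R τ) (hR : R =o[l] fun τ => exp (v * τ)) :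
    Tendsto (fun τ => log (f τ) - v * τ) l (𝓝 (log a)) := by
  set u : ℝ → ℝ := fun τ => a + R τ / exp (v * τ)
  have hu : Tendsto u l (𝓝 a) := by
    simpa using tendsto_const_nhds.add hR.tendsto_div_nhds_zero
  have hfu : ∀ τ, f τ = exp (v * τ) * u τ := fun τ => by
    rw [hf τ, mul_add, mul_div_cancel₀ _ (exp_pos _).ne']
    ring
  refine (hu.log ha.ne').congr' ?_
  filter_upwards [hu.eventually_ne ha.ne'] with τ hτ
  rw [hfu τ, log_mul (exp_pos _).ne' hτ, log_exp]
  ring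

/-- Inversion of the time change t(τ) = a e^{v₀τ} − bτ + c + O(τe^{−v₀τ}):
τ = (1/v₀) log t − (log a)/v₀ + o(1) and e^{v₀τ} = t/a + (b/(av₀)) log t + O(1). -/
theorem stmt19 (a v₀ b c : ℝ) (ha : 0 < a) (hv₀ : 0 < v₀)
    (Err t : ℝ → ℝ)
    (ht : ∀ τ, t τ = a * Real.exp (v₀ * τ) - b * τ + c + Err τ)
    (hE : Err =O[atTop] fun τ => Real.exp (-v₀ * τ) * τ) :
    Tendsto (fun τ => τ - ((1 / v₀) * Real.log (t τ) - Real.log a / v₀))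
      atTop (nhds 0) ∧
    (fun τ => Real.exp (v₀ * τ) -
        (t τ / a + (b / (a * v₀)) * Real.log (t τ))) =O[atTop] (fun _ => (1:ℝ)) := by
  have hErr : Tendsto Err atTop (𝓝 0) := hE.trans_tendsto (tendsto_exp_neg_mul_mul_self_atTop hv₀)
  have h1 : (fun _ => (1 : ℝ)) =o[atTop] fun τ => exp (v₀ * τ) :=
    isLittleO_one_exp_comp.2 (tendsto_id.const_mul_atTop hv₀)
  have hR : (fun τ => -b * τ + c * 1 + Err τ) =o[atTop] fun τ => exp (v₀ * τ) :=
    (((isLittleO_id_exp_mul_atTop hv₀).const_mul_left (-b)).add (h1.const_mul_left c)).add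
      ((hErr.isBigO_one ℝ).trans_isLittleO h1)
  have hlog : Tendsto (fun τ => log (t τ) - v₀ * τ) atTop (𝓝 (log a)) :=
    tendsto_log_sub_mul_of_eq_add_isLittleO ha (fun τ => by rw [ht τ]; ring) hR
  constructor
  · have h := (hlog.sub_const (log a)).div_const (-v₀)
    rw [sub_self, zero_div] at h
    refine h.congr fun τ => ?_
    field_simp
    ring
  · have h := ((hErr.const_add c).div_const a).neg.sub (hlog.const_mul (b / (a * v₀)))
    refine (h.isBigO_one ℝ).congr_left fun τ => ?_
    rw [ht τ]
    field_simp
    ring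
end
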